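/- Let (G,I,O,λ) be a labelled open graph with gflow (g,≺). Form Γ' by adding a new vertex u' adjacent only to an output u ∈ O, setting O' = (O∖{u}) ∪ {u'}, and extending λ by λ'(u) = XY. Then Γ' = (G',I,O',λ') has a gflow: extend g by g'(u) = {u'} and extend ≺ by u ≺ u'. -/

import Mathlib

/-!
The gflow conditions are local: each concerns a single non-output vertex `v` and the set
`g v`. In the new graph the non-outputs are the old non-outputs, which keep their correction
sets and whose odd neighbourhoods only gain `u'` when `u ∈ g v` (and then `v ≺ u ≺ u'`), and
the vertex `u`, whose correction set `{u'}` has odd neighbourhood exactly `{u}`, as the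
XY-plane demands.
-/

open Set

/-- The three measurement planes. -/
inductive MPlane | XY | XZ | YZ
deriving DecidableEq

/-- The odd neighbourhood of a set `K`: vertices with an odd number of neighbours in `K`. -/
def oddNbhd {V : Type*} (G : SimpleGraph V) (K : Set V) : Set V :=
  {u | Odd (K ∩ G.neighborSet u).ncard}

/-- `(g, prec)` is a gflow for the labelled open graph `(G, I, O, lam)`. -/
structure GFlow {V : Type*} (G : SimpleGraph V) (I O : Set V) (lam : V → MPlane)
    (g : V → Set V) (prec : V → V → Prop) : Prop where
  irrefl : ∀ v, ¬ prec v v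
  trans : ∀ u v w, prec u v → prec v w → prec u w
  noInput : ∀ v, v ∉ O → g v ∩ I = ∅
  g1 : ∀ v, v ∉ O → ∀ w ∈ g v, w ≠ v → prec v w
  g2 : ∀ v, v ∉ O → ∀ w ∈ oddNbhd G (g v), w ≠ v → prec v w
  gXY : ∀ v, v ∉ O → lam v = MPlane.XY → v ∉ g v ∧ v ∈ oddNbhd G (g v)
  gXZ : ∀ v, v ∉ O → lam v = MPlane.XZ → v ∈ g v ∧ v ∈ oddNbhd G (g v)
  gYZ : ∀ v, v ∉ O → lam v = MPlane.YZ → v ∈ g v ∧ v ∉ oddNbhd G (g v)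

/-- The graph obtained from `G` by adding a fresh vertex (`none`) adjacent only to `u`. -/
def addVertex {V : Type*} (G : SimpleGraph V) (u : V) : SimpleGraph (Option V) where
  Adj x y := (∃ a b, x = some a ∧ y = some b ∧ G.Adj a b) ∨
    (x = some u ∧ y = none) ∨ (x = none ∧ y = some u)
  symm := by
    constructor
    rintro x y (⟨a, b, rfl, rfl, hab⟩ | ⟨rfl, rfl⟩ | ⟨rfl, rfl⟩)
    · exact Or.inl ⟨b, a, rfl, rfl, hab.symm⟩
    · exact Or.inr (Or.inr ⟨rfl, rfl⟩)
    · exact Or.inr (Or.inl ⟨rfl, rfl⟩)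
  loopless := by
    constructor
    rintro x (⟨a, b, rfl, hb, hab⟩ | ⟨rfl, h⟩ | ⟨rfl, h⟩)
    · cases hb; exact G.loopless.irrefl a hab
    · cases h
    · cases h

section GFlowAt

variable {V : Type*} (G : SimpleGraph V) (I : Set V) (lam : V → MPlane) (g : V → Set V)
  (prec : V → V → Prop)

structure GFlowAt (v : V) : Prop where
  noInput : g v ∩ I = ∅
  g1 : ∀ w ∈ g v, w ≠ v → prec v w
  g2 : ∀ w ∈ oddNbhd G (g v), w ≠ v → prec v w
  gXY : lam v = MPlane.XY → v ∉ g v ∧ v ∈ oddNbhd G (g v)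
  gXZ : lam v = MPlane.XZ → v ∈ g v ∧ v ∈ oddNbhd G (g v)
  gYZ : lam v = MPlane.YZ → v ∈ g v ∧ v ∉ oddNbhd G (g v)

variable {G I lam g prec} {O : Set V}

theorem GFlow.gflowAt (h : GFlow G I O lam g prec) {v : V} (hv : v ∉ O) :
    GFlowAt G I lam g prec v :=
  ⟨h.noInput v hv, h.g1 v hv, h.g2 v hv, h.gXY v hv, h.gXZ v hv, h.gYZ v hv⟩

theorem GFlow.of_gflowAt (irrefl : ∀ v, ¬ prec v v)
    (trans : ∀ u v w, prec u v → prec v w → prec u w)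
    (hg : ∀ v, v ∉ O → GFlowAt G I lam g prec v) : GFlow G I O lam g prec where
  irrefl := irrefl
  trans := trans
  noInput v hv := (hg v hv).noInput
  g1 v hv := (hg v hv).g1
  g2 v hv := (hg v hv).g2
  gXY v hv := (hg v hv).gXY
  gXZ v hv := (hg v hv).gXZ
  gYZ v hv := (hg v hv).gYZ

end GFlowAt

section OddNbhd

variable {V : Type*} (G : SimpleGraph V)

theorem odd_ncard_inter_singleton_iff (s : Set V) (a : V) : Odd (s ∩ {a}).ncard ↔ a ∈ s := by
  by_cases h : a ∈ s <;> simp [h]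

theorem mem_oddNbhd_singleton_iff (v x : V) : x ∈ oddNbhd G {v} ↔ G.Adj x v := by
  rw [oddNbhd, mem_ofPred_eq, inter_comm, odd_ncard_inter_singleton_iff,
    SimpleGraph.mem_neighborSet]

theorem mem_oddNbhd_iff_of_neighborSet_eq_singleton {x y : V} (hx : G.neighborSet x = {y})
    (K : Set V) : x ∈ oddNbhd G K ↔ y ∈ K := by
  rw [oddNbhd, mem_ofPred_eq, hx, odd_ncard_inter_singleton_iff]

end OddNbhd

namespace addVertex

variable {V : Type*} (G : SimpleGraph V) (u : V)

@[simp]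
theorem adj_some_some (a b : V) : (addVertex G u).Adj (some a) (some b) ↔ G.Adj a b := by
  simp [addVertex]

@[simp]
theorem adj_none_left (x : Option V) : (addVertex G u).Adj none x ↔ x = some u := by
  simp [addVertex]

@[simp]
theorem adj_none_right (x : Option V) : (addVertex G u).Adj x none ↔ x = some u := by
  rw [SimpleGraph.adj_comm, adj_none_left]

theorem neighborSet_none : (addVertex G u).neighborSet none = {some u} := by
  ext x
  simp

theorem image_some_inter_neighborSet_some (K : Set V) (b : V) :
    some '' K ∩ (addVertex G u).neighborSet (some b) = some '' (K ∩ G.neighborSet b) := by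
  ext (_ | c) <;> simp

theorem some_mem_oddNbhd_image_some_iff (K : Set V) (b : V) :
    some b ∈ oddNbhd (addVertex G u) (some '' K) ↔ b ∈ oddNbhd G K := by
  simp only [oddNbhd, mem_ofPred_eq, image_some_inter_neighborSet_some,
    ncard_image_of_injective _ (Option.some_injective V)]

theorem none_mem_oddNbhd_image_some_iff (K : Set V) :
    none ∈ oddNbhd (addVertex G u) (some '' K) ↔ u ∈ K := by
  rw [mem_oddNbhd_iff_of_neighborSet_eq_singleton _ (neighborSet_none G u),
    (Option.some_injective V).mem_set_image]

end addVertex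

section AddOutput

variable {V : Type*} (u : V)

def addOutputStep (prec : V → V → Prop) : Option V → Option V → Prop :=
  fun x y => (∃ a b, x = some a ∧ y = some b ∧ prec a b) ∨ (x = some u ∧ y = none)

theorem exists_forall_prec_of_transGen_addOutputStep {prec : V → V → Prop}
    (trans : ∀ a b c, prec a b → prec b c → prec a c) {x y : Option V}
    (hxy : Relation.TransGen (addOutputStep u prec) x y) :
    ∃ a, x = some a ∧ ∀ b, y = some b → prec a b := by
  induction hxy with
  | single hstep =>
    rcases hstep with ⟨a, b, rfl, rfl, hab⟩ | ⟨rfl, rfl⟩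
    · exact ⟨a, rfl, fun _ hb => Option.some_injective _ hb ▸ hab⟩
    · exact ⟨u, rfl, fun _ hb => nomatch hb⟩
  | tail _ hstep ih =>
    obtain ⟨a, rfl, ha⟩ := ih
    rcases hstep with ⟨b, c, rfl, rfl, hbc⟩ | ⟨_, rfl⟩
    · exact ⟨a, rfl, fun _ hc => Option.some_injective _ hc ▸ trans _ _ _ (ha b rfl) hbc⟩
    · exact ⟨a, rfl, fun _ hb => nomatch hb⟩

theorem irrefl_transGen_addOutputStep {prec : V → V → Prop} (irrefl : ∀ v, ¬ prec v v)
    (trans : ∀ a b c, prec a b → prec b c → prec a c) (x : Option V) :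
    ¬ Relation.TransGen (addOutputStep u prec) x x := fun hx => by
  obtain ⟨a, rfl, ha⟩ := exists_forall_prec_of_transGen_addOutputStep u trans hx
  exact irrefl a (ha a rfl)

variable [DecidableEq V]

def addOutputLabel (lam : V → MPlane) : Option V → MPlane :=
  fun x => x.elim MPlane.XY (fun v => if v = u then MPlane.XY else lam v)

def addOutputFlow (g : V → Set V) : Option V → Set (Option V) :=
  fun x => x.elim ∅ (fun v => if v = u then {none} else some '' g v)

variable {G : SimpleGraph V} {I : Set V} {lam : V → MPlane} {g : V → Set V}
  {prec : V → V → Prop}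

theorem gflowAt_addOutput_self :
    GFlowAt (addVertex G u) (some '' I) (addOutputLabel u lam) (addOutputFlow u g)
      (Relation.TransGen (addOutputStep u prec)) (some u) := by
  have hlam : addOutputLabel u lam (some u) = MPlane.XY := by simp [addOutputLabel]
  have hg : addOutputFlow u g (some u) = {none} := by simp [addOutputFlow]
  refine ⟨by simp [hg], ?_, by simp [hg, mem_oddNbhd_singleton_iff],
    fun _ => by simp [hg, mem_oddNbhd_singleton_iff], by simp [hlam], by simp [hlam]⟩
  rw [hg]
  rintro w rfl -
  exact .single (Or.inr ⟨rfl, rfl⟩)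

variable {u}

theorem GFlowAt.addOutput {v : V} (h : GFlowAt G I lam g prec v) (hvu : v ≠ u) :
    GFlowAt (addVertex G u) (some '' I) (addOutputLabel u lam) (addOutputFlow u g)
      (Relation.TransGen (addOutputStep u prec)) (some v) := by
  have hlam : addOutputLabel u lam (some v) = lam v := by simp [addOutputLabel, hvu]
  have hg : addOutputFlow u g (some v) = some '' g v := by simp [addOutputFlow, hvu]
  refine ⟨?_, ?_, ?_, ?_, ?_, ?_⟩ <;>
    simp only [hlam, hg, (Option.some_injective V).mem_set_image,
      addVertex.some_mem_oddNbhd_image_some_iff]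
  · rw [← image_inter (Option.some_injective V), h.noInput, image_empty]
  · rintro _ ⟨b, hb, rfl⟩ hbv
    exact .single (Or.inl ⟨v, b, rfl, rfl, h.g1 b hb (ne_of_apply_ne some hbv)⟩)
  · rintro (_ | b) hw hbv
    · have hvu_prec : prec v u :=
        h.g1 u ((addVertex.none_mem_oddNbhd_image_some_iff G u _).mp hw) hvu.symm
      exact .head (Or.inl ⟨v, u, rfl, rfl, hvu_prec⟩) (.single (Or.inr ⟨rfl, rfl⟩))
    · have hb := (addVertex.some_mem_oddNbhd_image_some_iff G u _ b).mp hw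
      exact .single (Or.inl ⟨v, b, rfl, rfl, h.g2 b hb (ne_of_apply_ne some hbv)⟩)
  · exact h.gXY
  · exact h.gXZ
  · exact h.gYZ

end AddOutput

theorem gflow_addOutput_general {V : Type*} [DecidableEq V]
    (G : SimpleGraph V) (I O : Set V) (lam : V → MPlane)
    (g : V → Set V) (prec : V → V → Prop)
    (h : GFlow G I O lam g prec) (u : V) :
    GFlow (addVertex G u)
      (some '' I)
      ((some '' (O \ {u})) ∪ {none})
      (fun x => x.elim MPlane.XY (fun v => if v = u then MPlane.XY else lam v))
      (fun x => x.elim ∅ (fun v => if v = u then {none} else some '' g v))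
      (Relation.TransGen (fun x y =>
        (∃ a b, x = some a ∧ y = some b ∧ prec a b) ∨ (x = some u ∧ y = none))) := by
  refine GFlow.of_gflowAt (irrefl_transGen_addOutputStep u h.irrefl h.trans)
    (fun _ _ _ => .trans) ?_
  rintro (_ | v) hv
  · exact absurd (Or.inr rfl) hv
  · rcases eq_or_ne v u with rfl | hvu
    · exact gflowAt_addOutput_self v
    · exact (h.gflowAt fun hvO => hv (Or.inl ⟨v, ⟨hvO, hvu⟩, rfl⟩)).addOutput hvu

/-- Converting an output `u` into an XY-measured vertex and adding a new output
vertex `u'` (modelled as `none`) in its stead preserves gflow, via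
`g'(u) = {u'}` and the transitive closure of `≺ ∪ {(u,u')}`. -/
theorem gflow_addOutput {V : Type*} [Fintype V] [DecidableEq V]
    (G : SimpleGraph V) (I O : Set V) (lam : V → MPlane)
    (g : V → Set V) (prec : V → V → Prop)
    (h : GFlow G I O lam g prec) (u : V) (hu : u ∈ O) :
    GFlow (addVertex G u)
      (some '' I)
      ((some '' (O \ {u})) ∪ {none})
      (fun x => x.elim MPlane.XY (fun v => if v = u then MPlane.XY else lam v))
      (fun x => x.elim ∅ (fun v => if v = u then {none} else some '' g v))
      (Relation.TransGen (fun x y =>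
        (∃ a b, x = some a ∧ y = some b ∧ prec a b) ∨ (x = some u ∧ y = none))) :=
  gflow_addOutput_general G I O lam g prec h u
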